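/- arXiv:2512.05673 — 10 statements merged into one kernel-verified Lean document; each statement's English description precedes it below -/
import Mathlib

section
/- Convergence of the exact Uzawa method (Theorem 3.1). Let (r*, u*) be a saddle point. Fix τ with 0 < τ < 2/M². Given u⁰ ∈ U, define sequences (rᵏ)ₖ ⊆ V and (uᵏ)ₖ ⊆ U by: (rᵏ, v)_V = ℓ(v) − b(uᵏ, v) for all v ∈ V, and (uᵏ⁺¹, w)_U = (uᵏ, w)_U + τ b(w, rᵏ) for all w ∈ U. Then uᵏ → u* in U and rᵏ → r* in V as k → ∞. -/
open scoped RealInnerProductSpace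
open Filter

/-- Convergence of the exact Uzawa method (Theorem 3.1). -/
theorem uzawa_exact_convergence
    {U V : Type*}
    [NormedAddCommGroup U] [InnerProductSpace ℝ U] [CompleteSpace U]
    [NormedAddCommGroup V] [InnerProductSpace ℝ V] [CompleteSpace V]
    (B : U →L[ℝ] V →L[ℝ] ℝ) (ℓ : V →L[ℝ] ℝ) (m M : ℝ)
    (hm : 0 < m) (hmM : m ≤ M)
    (hBlow : ∀ x : U, m * ‖x‖ ≤ ‖B x‖) (hBup : ∀ x : U, ‖B x‖ ≤ M * ‖x‖)
    (rstar : V) (ustar : U)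
    (hsad1 : ∀ v : V, ⟪rstar, v⟫ + B ustar v = ℓ v)
    (hsad2 : ∀ w : U, B w rstar = 0)
    (τ : ℝ) (hτ0 : 0 < τ) (hτ2 : τ < 2 / M ^ 2)
    (u : ℕ → U) (r : ℕ → V)
    (hr : ∀ k, ∀ v : V, ⟪r k, v⟫ = ℓ v - B (u k) v)
    (hu : ∀ k, ∀ w : U, ⟪u (k + 1), w⟫ = ⟪u k, w⟫ + τ * B w (r k)) :
    Tendsto u atTop (nhds ustar) ∧ Tendsto r atTop (nhds rstar) := by
  have hM : 0 < M := lt_of_lt_of_le hm hmM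
  have hτM : τ * M ^ 2 < 2 := by
    have := (lt_div_iff₀ (by positivity : (0:ℝ) < M ^ 2)).mp hτ2
    linarith
  set e : ℕ → U := fun k => u k - ustar with he
  set s : ℕ → V := fun k => r k - rstar with hs
  -- ⟪s k, v⟫ = -(B (e k) v)
  have hsv : ∀ k v, ⟪s k, v⟫ = -(B (e k) v) := by
    intro k v
    have h1 := hr k v
    have h2 := hsad1 v
    simp only [hs, he, inner_sub_left, map_sub, ContinuousLinearMap.sub_apply]
    linarith
  have hBe_le : ∀ k, ‖B (e k)‖ ≤ ‖s k‖ := by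
    intro k
    apply ContinuousLinearMap.opNorm_le_bound _ (norm_nonneg _)
    intro v
    calc ‖B (e k) v‖ = ‖⟪s k, v⟫‖ := by rw [hsv k v]; simp
    _ ≤ ‖s k‖ * ‖v‖ := norm_inner_le_norm _ _
  have hme : ∀ k, m * ‖e k‖ ≤ ‖s k‖ := fun k => (hBlow (e k)).trans (hBe_le k)
  have hsM : ∀ k, ‖s k‖ ≤ M * ‖e k‖ := by
    intro k
    rcases eq_or_ne (s k) 0 with h | h
    · simp only [h, norm_zero]; positivity
    · have hs0 : 0 < ‖s k‖ := norm_pos_iff.mpr h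
      have h1 : ‖s k‖ ^ 2 = -(B (e k) (s k)) := by
        rw [← hsv k (s k)]; exact (real_inner_self_eq_norm_sq _).symm
      have h2 : ‖s k‖ ^ 2 ≤ M * ‖e k‖ * ‖s k‖ := by
        rw [h1]
        calc -(B (e k) (s k)) ≤ |B (e k) (s k)| := neg_le_abs _
        _ = ‖B (e k) (s k)‖ := (Real.norm_eq_abs _).symm
        _ ≤ ‖B (e k)‖ * ‖s k‖ := (B (e k)).le_opNorm _
        _ ≤ M * ‖e k‖ * ‖s k‖ := by
            apply mul_le_mul_of_nonneg_right (hBup _) (norm_nonneg _)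
      nlinarith
  -- difference equation
  have hd : ∀ k w, ⟪e (k+1) - e k, w⟫ = τ * B w (s k) := by
    intro k w
    have h1 := hu k w
    have h2 := hsad2 w
    have h3 : (B w) (s k) = B w (r k) := by
      simp [hs, map_sub, h2]
    have h4 : ⟪e (k+1) - e k, w⟫ = ⟪u (k+1), w⟫ - ⟪u k, w⟫ := by
      simp only [he, inner_sub_left]; ring
    rw [h4, h1, h3]; ring
  -- norm of difference
  have hdn : ∀ k, ‖e (k+1) - e k‖ ≤ τ * M * ‖s k‖ := by
    intro k
    set d := e (k+1) - e k with hdd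
    rcases eq_or_ne d 0 with h | h
    · simp only [h, norm_zero]; positivity
    · have hd0 : 0 < ‖d‖ := norm_pos_iff.mpr h
      have h1 : ‖d‖ ^ 2 = τ * B d (s k) := by
        rw [← hd k d]; exact (real_inner_self_eq_norm_sq _).symm
      have h2 : ‖d‖ ^ 2 ≤ τ * M * ‖s k‖ * ‖d‖ := by
        rw [h1]
        calc τ * B d (s k) ≤ τ * ‖B d (s k)‖ := by
              apply mul_le_mul_of_nonneg_left _ hτ0.le
              rw [Real.norm_eq_abs]; exact le_abs_self _
        _ ≤ τ * (‖B d‖ * ‖s k‖) := by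
              apply mul_le_mul_of_nonneg_left ((B d).le_opNorm _) hτ0.le
        _ ≤ τ * (M * ‖d‖ * ‖s k‖) := by
              apply mul_le_mul_of_nonneg_left
                (mul_le_mul_of_nonneg_right (hBup _) (norm_nonneg _)) hτ0.le
        _ = τ * M * ‖s k‖ * ‖d‖ := by ring
      nlinarith
  set ρ : ℝ := 1 - τ * m ^ 2 * (2 - τ * M ^ 2) with hρ
  have hρ0 : 0 ≤ ρ := by nlinarith [sq_nonneg (1 - τ * m ^ 2), sq_nonneg m, sq_nonneg M,
    mul_le_mul_of_nonneg_left (mul_le_mul hmM hmM hm.le hM.le) (mul_pos hτ0 hτ0).le]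
  have hρ1 : ρ < 1 := by
    have h1 : 0 < τ * m ^ 2 * (2 - τ * M ^ 2) := by
      apply mul_pos (by positivity) (by linarith)
    rw [hρ]; linarith
  -- contraction
  have hcontr : ∀ k, ‖e (k+1)‖ ^ 2 ≤ ρ * ‖e k‖ ^ 2 := by
    intro k
    set d := e (k+1) - e k with hdd
    have hsplit : e (k+1) = e k + d := by rw [hdd]; abel
    have hexp : ‖e (k+1)‖ ^ 2 = ‖e k‖ ^ 2 + 2 * ⟪e k, d⟫ + ‖d‖ ^ 2 := by
      rw [hsplit]
      rw [@norm_add_sq_real]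
    have hinner : ⟪e k, d⟫ = - (τ * ‖s k‖ ^ 2) := by
      have h1 : ⟪d, e k⟫ = τ * B (e k) (s k) := hd k (e k)
      have h2 : B (e k) (s k) = -‖s k‖ ^ 2 := by
        have := hsv k (s k)
        rw [real_inner_self_eq_norm_sq] at this
        linarith
      rw [real_inner_comm, h1, h2]; ring
    have hdsq : ‖d‖ ^ 2 ≤ τ ^ 2 * M ^ 2 * ‖s k‖ ^ 2 := by
      have h1 := hdn k
      have h0 : 0 ≤ ‖d‖ := norm_nonneg _
      have h2 : 0 ≤ τ * M * ‖s k‖ := by positivity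
      nlinarith
    have hsq : (m * ‖e k‖) ^ 2 ≤ ‖s k‖ ^ 2 := by
      have := hme k
      have h0 : 0 ≤ m * ‖e k‖ := by positivity
      nlinarith
    have hfac : 0 < 2 - τ * M ^ 2 := by linarith
    calc ‖e (k+1)‖ ^ 2 = ‖e k‖ ^ 2 - 2 * τ * ‖s k‖ ^ 2 + ‖d‖ ^ 2 := by
          rw [hexp, hinner]; ring
    _ ≤ ‖e k‖ ^ 2 - τ * (2 - τ * M ^ 2) * ‖s k‖ ^ 2 := by linarith [hdsq]
    _ ≤ ‖e k‖ ^ 2 - τ * (2 - τ * M ^ 2) * (m * ‖e k‖) ^ 2 := by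
          have := mul_le_mul_of_nonneg_left hsq (mul_nonneg hτ0.le hfac.le)
          linarith
    _ = ρ * ‖e k‖ ^ 2 := by rw [hρ]; ring
  -- geometric decay
  have hgeom : ∀ k, ‖e k‖ ^ 2 ≤ ρ ^ k * ‖e 0‖ ^ 2 := by
    intro k
    induction k with
    | zero => simp
    | succ n ih =>
        calc ‖e (n+1)‖ ^ 2 ≤ ρ * ‖e n‖ ^ 2 := hcontr n
        _ ≤ ρ * (ρ ^ n * ‖e 0‖ ^ 2) := mul_le_mul_of_nonneg_left ih hρ0
        _ = ρ ^ (n+1) * ‖e 0‖ ^ 2 := by ring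
  have hlim : Tendsto (fun k => ρ ^ k * ‖e 0‖ ^ 2) atTop (nhds 0) := by
    have := tendsto_pow_atTop_nhds_zero_of_lt_one hρ0 hρ1
    simpa using this.mul_const (‖e 0‖ ^ 2)
  have hsq0 : Tendsto (fun k => ‖e k‖ ^ 2) atTop (nhds 0) :=
    squeeze_zero (fun k => by positivity) hgeom hlim
  have henorm : Tendsto (fun k => ‖e k‖) atTop (nhds 0) := by
    have h := (Real.continuous_sqrt.tendsto 0).comp hsq0
    rw [Real.sqrt_zero] at h
    refine h.congr fun k => ?_
    simp [Function.comp, Real.sqrt_sq (norm_nonneg _)]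
  have hu_conv : Tendsto u atTop (nhds ustar) := by
    rw [tendsto_iff_norm_sub_tendsto_zero]
    exact henorm
  refine ⟨hu_conv, ?_⟩
  rw [tendsto_iff_norm_sub_tendsto_zero]
  apply squeeze_zero (fun k => norm_nonneg _) hsM
  simpa using henorm.const_mul M
end

section
/- One-step error inequality for the exact Uzawa iteration. Let (r*, u*) be a saddle point and τ > 0. Let u ∈ U, let r ∈ V satisfy (r, v)_V = ℓ(v) − b(u, v) for all v ∈ V, and let u⁺ ∈ U satisfy (u⁺, w)_U = (u, w)_U + τ b(w, r) for all w ∈ U. Then ‖u⁺ − u*‖_U² ≤ ‖u − u*‖_U² + (τ²M² − 2τ)‖r − r*‖_V². -/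
open scoped RealInnerProductSpace

/-- One-step error inequality for the exact Uzawa iteration. -/
theorem uzawa_one_step_error
    {U V : Type*}
    [NormedAddCommGroup U] [InnerProductSpace ℝ U] [CompleteSpace U]
    [NormedAddCommGroup V] [InnerProductSpace ℝ V] [CompleteSpace V]
    (B : U →L[ℝ] V →L[ℝ] ℝ) (ℓ : V →L[ℝ] ℝ) (m M : ℝ)
    (hm : 0 < m) (hmM : m ≤ M)
    (hBlow : ∀ x : U, m * ‖x‖ ≤ ‖B x‖) (hBup : ∀ x : U, ‖B x‖ ≤ M * ‖x‖)
    (rstar : V) (ustar : U)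
    (hsad1 : ∀ v : V, ⟪rstar, v⟫ + B ustar v = ℓ v)
    (hsad2 : ∀ w : U, B w rstar = 0)
    (τ : ℝ) (hτ0 : 0 < τ)
    (u : U) (r : V) (uplus : U)
    (hr : ∀ v : V, ⟪r, v⟫ = ℓ v - B u v)
    (hu : ∀ w : U, ⟪uplus, w⟫ = ⟪u, w⟫ + τ * B w r) :
    ‖uplus - ustar‖ ^ 2 ≤
      ‖u - ustar‖ ^ 2 + (τ ^ 2 * M ^ 2 - 2 * τ) * ‖r - rstar‖ ^ 2 := by
  set s := r - rstar with hsdef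
  have hMnn : (0:ℝ) ≤ M := le_trans hm.le hmM
  have hs : ∀ v : V, ⟪s, v⟫ = -(B (u - ustar) v) := by
    intro v
    have h1 := hr v
    have h2 := hsad1 v
    simp only [hsdef, inner_sub_left, map_sub, ContinuousLinearMap.sub_apply]
    linarith
  set d := (InnerProductSpace.toDual ℝ U).symm (B.flip s) with hddef
  have hd : ∀ w : U, ⟪d, w⟫ = B w s := by
    intro w
    rw [hddef, InnerProductSpace.toDual_symm_apply]
    rfl
  have hup : uplus = u + τ • d := by
    apply ext_inner_right ℝ
    intro w
    rw [hu w, inner_add_left, real_inner_smul_left, hd]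
    have : B w s = B w r := by
      simp [hsdef, hsad2 w]
    rw [this]
  have hdnorm : ‖d‖ ≤ M * ‖s‖ := by
    have h1 : ‖d‖ = ‖B.flip s‖ := (InnerProductSpace.toDual ℝ U).symm.norm_map _
    rw [h1]
    apply ContinuousLinearMap.opNorm_le_bound _ (by positivity)
    intro w
    have h2 : |B w s| ≤ ‖B w‖ * ‖s‖ := (B w).le_opNorm s
    have h3 : ‖B w‖ * ‖s‖ ≤ M * ‖w‖ * ‖s‖ :=
      mul_le_mul_of_nonneg_right (hBup w) (norm_nonneg s)
    calc ‖B.flip s w‖ = |B w s| := rfl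
      _ ≤ M * ‖w‖ * ‖s‖ := le_trans h2 h3
      _ = M * ‖s‖ * ‖w‖ := by ring
  have hkey : uplus - ustar = (u - ustar) + τ • d := by
    rw [hup]; abel
  have hcross : ⟪u - ustar, τ • d⟫ = -(τ * ‖s‖ ^ 2) := by
    rw [real_inner_smul_right, real_inner_comm, hd]
    have := hs s
    rw [real_inner_self_eq_norm_sq] at this
    nlinarith [this]
  have hnorm : ‖uplus - ustar‖ ^ 2 =
      ‖u - ustar‖ ^ 2 + 2 * ⟪u - ustar, τ • d⟫ + ‖τ • d‖ ^ 2 := by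
    rw [hkey, norm_add_sq_real]
  have hτd : ‖τ • d‖ ^ 2 ≤ τ ^ 2 * M ^ 2 * ‖s‖ ^ 2 := by
    rw [norm_smul, Real.norm_eq_abs, abs_of_pos hτ0]
    nlinarith [mul_self_le_mul_self (norm_nonneg d) hdnorm, sq_nonneg τ, hτ0.le]
  rw [hnorm, hcross]
  nlinarith [hτd]
end

section
/- Residual error bound for the exact Uzawa iteration. Let (r*, u*) be a saddle point and let 0 < τ < 2/M². Let u ∈ U, let r ∈ V satisfy (r, v)_V = ℓ(v) − b(u, v) for all v ∈ V, and let u⁺ ∈ U satisfy (u⁺, w)_U = (u, w)_U + τ b(w, r) for all w ∈ U. Then ‖r − r*‖_V² ≤ (‖u − u*‖_U² − ‖u⁺ − u*‖_U²)/(2τ − τ²M²). -/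
open scoped RealInnerProductSpace

/-- Residual error bound for the exact Uzawa iteration. -/
theorem uzawa_residual_error_bound
    {U V : Type*}
    [NormedAddCommGroup U] [InnerProductSpace ℝ U] [CompleteSpace U]
    [NormedAddCommGroup V] [InnerProductSpace ℝ V] [CompleteSpace V]
    (B : U →L[ℝ] V →L[ℝ] ℝ) (ℓ : V →L[ℝ] ℝ) (m M : ℝ)
    (hm : 0 < m) (hmM : m ≤ M)
    (hBlow : ∀ x : U, m * ‖x‖ ≤ ‖B x‖) (hBup : ∀ x : U, ‖B x‖ ≤ M * ‖x‖)
    (rstar : V) (ustar : U)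
    (hsad1 : ∀ v : V, ⟪rstar, v⟫ + B ustar v = ℓ v)
    (hsad2 : ∀ w : U, B w rstar = 0)
    (τ : ℝ) (hτ0 : 0 < τ) (hτ2 : τ < 2 / M ^ 2)
    (u : U) (r : V) (uplus : U)
    (hr : ∀ v : V, ⟪r, v⟫ = ℓ v - B u v)
    (hu : ∀ w : U, ⟪uplus, w⟫ = ⟪u, w⟫ + τ * B w r) :
    ‖r - rstar‖ ^ 2 ≤
      (‖u - ustar‖ ^ 2 - ‖uplus - ustar‖ ^ 2) / (2 * τ - τ ^ 2 * M ^ 2) := by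
  have hM : 0 < M := lt_of_lt_of_le hm hmM
  set d : V := r - rstar with hd
  set e : U := u - ustar with he
  -- key identity: ⟪d, v⟫ = - B e v
  have hdv : ∀ v : V, ⟪d, v⟫ = -(B e v) := by
    intro v
    have h1 := hr v
    have h2 := hsad1 v
    have : B e v = B u v - B ustar v := by simp [he, map_sub]
    rw [hd, inner_sub_left]
    linarith
  -- z : Riesz representative of w ↦ B w d
  set z : U := (InnerProductSpace.toDual ℝ U).symm (B.flip d) with hz
  have hzw : ∀ w : U, ⟪z, w⟫ = B w d := by
    intro w
    rw [hz, InnerProductSpace.toDual_symm_apply]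
    rfl
  -- uplus - ustar = e + τ • z
  have hup : uplus - ustar = e + τ • z := by
    apply ext_inner_right ℝ
    intro w
    have hBr : B w r = B w d := by
      have := hsad2 w
      simp [hd, map_sub, this]
    rw [inner_sub_left, hu w, inner_add_left, real_inner_smul_left, hzw w, he,
      inner_sub_left, hBr]
    ring
  -- ⟪e, z⟫ = -‖d‖²
  have hez : ⟪e, z⟫ = -‖d‖ ^ 2 := by
    rw [real_inner_comm, hzw e]
    have := hdv d
    rw [real_inner_self_eq_norm_sq] at this
    linarith
  -- ‖z‖ ≤ M ‖d‖
  have hznorm : ‖z‖ ≤ M * ‖d‖ := by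
    have h1 : ‖z‖ ^ 2 = B z d := by
      rw [← hzw z, real_inner_self_eq_norm_sq]
    have h2 : B z d ≤ ‖B z‖ * ‖d‖ := by
      calc B z d ≤ |B z d| := le_abs_self _
        _ = ‖B z d‖ := rfl
        _ ≤ ‖B z‖ * ‖d‖ := (B z).le_opNorm d
    have h3 : ‖B z‖ ≤ M * ‖z‖ := hBup z
    have h4 : ‖z‖ ^ 2 ≤ M * ‖z‖ * ‖d‖ := by
      calc ‖z‖ ^ 2 = B z d := h1
        _ ≤ ‖B z‖ * ‖d‖ := h2
        _ ≤ M * ‖z‖ * ‖d‖ := by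
            apply mul_le_mul_of_nonneg_right h3 (norm_nonneg _)
    rcases eq_or_lt_of_le (norm_nonneg z) with h | h
    · rw [← h]; positivity
    · nlinarith
  -- expand ‖uplus - ustar‖²
  have hexp : ‖uplus - ustar‖ ^ 2 = ‖e‖ ^ 2 - 2 * τ * ‖d‖ ^ 2 + τ ^ 2 * ‖z‖ ^ 2 := by
    rw [hup, norm_add_sq_real, real_inner_smul_right, hez, norm_smul]
    simp [abs_of_pos hτ0]
    ring
  have hkey : (2 * τ - τ ^ 2 * M ^ 2) * ‖d‖ ^ 2 ≤ ‖e‖ ^ 2 - ‖uplus - ustar‖ ^ 2 := by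
    have hz2 : ‖z‖ ^ 2 ≤ M ^ 2 * ‖d‖ ^ 2 := by
      nlinarith [norm_nonneg z, norm_nonneg d]
    nlinarith [sq_nonneg τ]
  have hpos : 0 < 2 * τ - τ ^ 2 * M ^ 2 := by
    have hM2 : 0 < M ^ 2 := by positivity
    have : τ * M ^ 2 < 2 := by
      calc τ * M ^ 2 < (2 / M ^ 2) * M ^ 2 := by
            exact mul_lt_mul_of_pos_right hτ2 hM2
        _ = 2 := by field_simp
    nlinarith
  rw [le_div_iff₀ hpos]
  linarith [hkey]
end

section
/- Convergence of the inexact Uzawa method (Theorem 3.2). Assume the problem is consistent: ℓ(v) = b(u*, v) for all v ∈ V, so that (0, u*) is the saddle point (r* = 0). Fix δ > 0, ε > 0, τ > 0, set γ := ‖I − τ R_U⁻¹B†R_V⁻¹B‖ (operator norm on U), and assume γ < 1 and δ + ε(1 + δ) < (1 − γ)/(τM²). Given u⁰_{δ,ε} ∈ U, suppose for each k ≥ 0: rᵏ := R_V⁻¹(ℓ − B uᵏ_{δ,ε}); rᵏ_δ ∈ V satisfies ‖rᵏ_δ − rᵏ‖_V ≤ δ‖rᵏ‖_V; uᵏ⁺¹_δ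 := uᵏ_{δ,ε} + τ R_U⁻¹B†rᵏ_δ; and uᵏ⁺¹_{δ,ε} ∈ U satisfies ‖uᵏ⁺¹_{δ,ε} − uᵏ⁺¹_δ‖_U ≤ ε‖uᵏ_{δ,ε} − uᵏ⁺¹_δ‖_U. Then uᵏ_{δ,ε} → u* in U and rᵏ_δ → r* = 0 in V as k → ∞. -/
/-!
Since `ℓ = B u*`, the residual of an iterate `u` is `-R_V⁻¹ B (u - u*)`, so an exact Uzawa step
maps the error `u - u*` to `(I - τG)(u - u*)`, a `γ`-contraction. The inexact residual perturbs
this by at most `τM²δ‖u - u*‖` and the inexact update by at most `ετM²(1 + δ)‖u - u*‖`, so the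
error contracts by the factor `γ + τM²(δ + ε(1 + δ)) < 1` at every step, and `r_δ → 0` because
`‖r_δ‖ ≤ (1 + δ)M‖u - u*‖`.
-/

open Filter InnerProductSpace

theorem tendsto_zero_of_succ_le_mul {x : ℕ → ℝ} {ρ : ℝ} (hx : ∀ k, 0 ≤ x k) (hρ₀ : 0 ≤ ρ)
    (hρ₁ : ρ < 1) (h : ∀ k, x (k + 1) ≤ ρ * x k) : Tendsto x atTop (nhds 0) :=
  squeeze_zero hx (fun k => le_geom hρ₀ k fun j _ => h j)
    (by simpa using (tendsto_pow_atTop_nhds_zero_of_lt_one hρ₀ hρ₁).mul_const (x 0))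

section Uzawa

variable {U V : Type*}
  [NormedAddCommGroup U] [InnerProductSpace ℝ U]
  [NormedAddCommGroup V] [InnerProductSpace ℝ V]
  {B : U →L[ℝ] V →L[ℝ] ℝ} {M : ℝ}

theorem norm_toDual_symm_flip_le [CompleteSpace U] (hM : 0 ≤ M) (hB : ∀ x, ‖B x‖ ≤ M * ‖x‖)
    (v : V) :
    ‖(toDual ℝ U).symm (B.flip v)‖ ≤ M * ‖v‖ := by
  rw [LinearIsometryEquiv.norm_map]
  calc ‖B.flip v‖ ≤ ‖B.flip‖ * ‖v‖ := B.flip.le_opNorm v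
    _ ≤ M * ‖v‖ := by rw [B.opNorm_flip]; gcongr; exact B.opNorm_le_bound hM hB

variable [CompleteSpace V]

theorem toDual_symm_sub_eq_neg (u ustar : U) :
    (toDual ℝ V).symm (B ustar - B u) = -(toDual ℝ V).symm (B (u - ustar)) := by
  rw [← map_neg, map_sub B, neg_sub]

theorem norm_residual_le (hB : ∀ x, ‖B x‖ ≤ M * ‖x‖) (u ustar : U) :
    ‖(toDual ℝ V).symm (B ustar - B u)‖ ≤ M * ‖u - ustar‖ := by
  rw [toDual_symm_sub_eq_neg, norm_neg, LinearIsometryEquiv.norm_map]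
  exact hB _

theorem norm_le_of_norm_sub_residual_le (hB : ∀ x, ‖B x‖ ≤ M * ‖x‖) {δ : ℝ} (hδ : 0 ≤ δ)
    {u ustar : U} {s : V}
    (hs : ‖s - (toDual ℝ V).symm (B ustar - B u)‖ ≤ δ * ‖(toDual ℝ V).symm (B ustar - B u)‖) :
    ‖s‖ ≤ (1 + δ) * M * ‖u - ustar‖ := by
  have hr := norm_residual_le hB u ustar
  have := norm_sub_norm_le s ((toDual ℝ V).symm (B ustar - B u))
  nlinarith

variable [CompleteSpace U]

theorem exact_uzawa_error_eq {G : U →L[ℝ] U}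
    (hG : ∀ x, G x = (toDual ℝ U).symm (B.flip ((toDual ℝ V).symm (B x)))) (τ : ℝ) (u ustar : U) :
    u + τ • (toDual ℝ U).symm (B.flip ((toDual ℝ V).symm (B ustar - B u))) - ustar =
      (ContinuousLinearMap.id ℝ U - τ • G) (u - ustar) := by
  rw [toDual_symm_sub_eq_neg, map_neg, map_neg, ← hG]
  simp only [_root_.sub_apply, _root_.smul_apply, ContinuousLinearMap.id_apply, smul_neg]
  abel

theorem norm_inexact_uzawa_step_error_le (hM : 0 ≤ M) (hB : ∀ x, ‖B x‖ ≤ M * ‖x‖)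
    {G : U →L[ℝ] U}
    (hG : ∀ x, G x = (toDual ℝ U).symm (B.flip ((toDual ℝ V).symm (B x))))
    {δ τ : ℝ} (hδ : 0 ≤ δ) (hτ : 0 ≤ τ) {u ustar : U} {s : V}
    (hs : ‖s - (toDual ℝ V).symm (B ustar - B u)‖ ≤ δ * ‖(toDual ℝ V).symm (B ustar - B u)‖) :
    ‖u + τ • (toDual ℝ U).symm (B.flip s) - ustar‖ ≤
      (‖ContinuousLinearMap.id ℝ U - τ • G‖ + τ * M ^ 2 * δ) * ‖u - ustar‖ := by
  set r := (toDual ℝ V).symm (B ustar - B u)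
  have hsplit : u + τ • (toDual ℝ U).symm (B.flip s) - ustar =
      (ContinuousLinearMap.id ℝ U - τ • G) (u - ustar) +
        τ • (toDual ℝ U).symm (B.flip (s - r)) := by
    rw [← exact_uzawa_error_eq hG, map_sub B.flip s r, (toDual ℝ U).symm.map_sub, smul_sub]
    abel
  have hperturb : ‖(toDual ℝ U).symm (B.flip (s - r))‖ ≤ M * (δ * (M * ‖u - ustar‖)) := by
    grw [norm_toDual_symm_flip_le hM hB, hs, norm_residual_le hB]
  rw [hsplit]
  grw [norm_add_le, ContinuousLinearMap.le_opNorm, norm_smul, Real.norm_of_nonneg hτ, hperturb]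
  exact le_of_eq (by ring)

theorem norm_inexact_uzawa_error_le (hM : 0 ≤ M) (hB : ∀ x, ‖B x‖ ≤ M * ‖x‖)
    {G : U →L[ℝ] U}
    (hG : ∀ x, G x = (toDual ℝ U).symm (B.flip ((toDual ℝ V).symm (B x))))
    {δ ε τ : ℝ} (hδ : 0 ≤ δ) (hε : 0 ≤ ε) (hτ : 0 ≤ τ) {u ustar u' w : U} {s : V}
    (hs : ‖s - (toDual ℝ V).symm (B ustar - B u)‖ ≤ δ * ‖(toDual ℝ V).symm (B ustar - B u)‖)
    (hu' : u' = u + τ • (toDual ℝ U).symm (B.flip s)) (hw : ‖w - u'‖ ≤ ε * ‖u - u'‖) :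
    ‖w - ustar‖ ≤
      (‖ContinuousLinearMap.id ℝ U - τ • G‖ + τ * M ^ 2 * (δ + ε * (1 + δ))) * ‖u - ustar‖ := by
  have hstep : ‖u - u'‖ ≤ τ * (M * ((1 + δ) * M * ‖u - ustar‖)) := by
    rw [hu', sub_add_cancel_left, norm_neg, norm_smul, Real.norm_of_nonneg hτ]
    grw [norm_toDual_symm_flip_le hM hB, norm_le_of_norm_sub_residual_le hB hδ hs]
  calc ‖w - ustar‖ ≤ ‖w - u'‖ + ‖u' - ustar‖ := norm_sub_le_norm_sub_add_norm_sub _ _ _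
    _ ≤ ε * (τ * (M * ((1 + δ) * M * ‖u - ustar‖))) +
        (‖ContinuousLinearMap.id ℝ U - τ • G‖ + τ * M ^ 2 * δ) * ‖u - ustar‖ := by
      grw [hw, hstep, hu', norm_inexact_uzawa_step_error_le hM hB hG hδ hτ hs]
    _ = _ := by ring

end Uzawa

theorem inexact_uzawa_convergence_general
    {U V : Type*}
    [NormedAddCommGroup U] [InnerProductSpace ℝ U] [CompleteSpace U]
    [NormedAddCommGroup V] [InnerProductSpace ℝ V] [CompleteSpace V]
    (B : U →L[ℝ] V →L[ℝ] ℝ) (ℓ : V →L[ℝ] ℝ) (m M : ℝ)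
    (hm : 0 < m) (hmM : m ≤ M)
    (hBup : ∀ x : U, ‖B x‖ ≤ M * ‖x‖)
    (ustar : U) (hcons : ∀ v : V, ℓ v = B ustar v)
    (δ ε τ : ℝ) (hδ : 0 < δ) (hε : 0 < ε) (hτ : 0 < τ)
    (G : U →L[ℝ] U)
    (hG : ∀ x : U, G x = (InnerProductSpace.toDual ℝ U).symm
      (B.flip ((InnerProductSpace.toDual ℝ V).symm (B x))))
    (γ : ℝ) (hγdef : γ = ‖ContinuousLinearMap.id ℝ U - τ • G‖)
    (hsmall : δ + ε * (1 + δ) < (1 - γ) / (τ * M ^ 2))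
    (uδε : ℕ → U) (rδ : ℕ → V) (uδ : ℕ → U)
    (hrδ : ∀ k, ‖rδ k - (InnerProductSpace.toDual ℝ V).symm (ℓ - B (uδε k))‖ ≤
      δ * ‖(InnerProductSpace.toDual ℝ V).symm (ℓ - B (uδε k))‖)
    (huδ : ∀ k, uδ (k + 1) =
      uδε k + τ • (InnerProductSpace.toDual ℝ U).symm (B.flip (rδ k)))
    (huδε : ∀ k, ‖uδε (k + 1) - uδ (k + 1)‖ ≤ ε * ‖uδε k - uδ (k + 1)‖) :
    Tendsto uδε atTop (nhds ustar) ∧ Tendsto rδ atTop (nhds 0) := by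
  obtain rfl : ℓ = B ustar := ContinuousLinearMap.ext hcons
  have hMpos : 0 < M := hm.trans_le hmM
  have hρ₀ : 0 ≤ γ + τ * M ^ 2 * (δ + ε * (1 + δ)) := by
    have : 0 ≤ γ := hγdef ▸ norm_nonneg _
    positivity
  have hρ₁ : γ + τ * M ^ 2 * (δ + ε * (1 + δ)) < 1 := by
    rw [lt_div_iff₀ (by positivity)] at hsmall
    linarith
  have herr : Tendsto (fun k => ‖uδε k - ustar‖) atTop (nhds 0) :=
    tendsto_zero_of_succ_le_mul (fun _ => norm_nonneg _) hρ₀ hρ₁ fun k => hγdef ▸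
      norm_inexact_uzawa_error_le hMpos.le hBup hG hδ.le hε.le hτ.le (hrδ k) (huδ k) (huδε k)
  refine ⟨tendsto_iff_norm_sub_tendsto_zero.mpr herr, tendsto_zero_iff_norm_tendsto_zero.mpr ?_⟩
  exact squeeze_zero (fun _ => norm_nonneg _)
    (fun k => norm_le_of_norm_sub_residual_le hBup hδ.le (hrδ k))
    (by simpa using herr.const_mul ((1 + δ) * M))

/-- Convergence of the inexact Uzawa method (Theorem 3.2). -/
theorem inexact_uzawa_convergence
    {U V : Type*}
    [NormedAddCommGroup U] [InnerProductSpace ℝ U] [CompleteSpace U]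
    [NormedAddCommGroup V] [InnerProductSpace ℝ V] [CompleteSpace V]
    (B : U →L[ℝ] V →L[ℝ] ℝ) (ℓ : V →L[ℝ] ℝ) (m M : ℝ)
    (hm : 0 < m) (hmM : m ≤ M)
    (hBlow : ∀ x : U, m * ‖x‖ ≤ ‖B x‖) (hBup : ∀ x : U, ‖B x‖ ≤ M * ‖x‖)
    (ustar : U) (hcons : ∀ v : V, ℓ v = B ustar v)
    (δ ε τ : ℝ) (hδ : 0 < δ) (hε : 0 < ε) (hτ : 0 < τ)
    (G : U →L[ℝ] U)
    (hG : ∀ x : U, G x = (InnerProductSpace.toDual ℝ U).symm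
      (B.flip ((InnerProductSpace.toDual ℝ V).symm (B x))))
    (γ : ℝ) (hγdef : γ = ‖ContinuousLinearMap.id ℝ U - τ • G‖)
    (hγ : γ < 1) (hsmall : δ + ε * (1 + δ) < (1 - γ) / (τ * M ^ 2))
    (uδε : ℕ → U) (rδ : ℕ → V) (uδ : ℕ → U)
    (hrδ : ∀ k, ‖rδ k - (InnerProductSpace.toDual ℝ V).symm (ℓ - B (uδε k))‖ ≤
      δ * ‖(InnerProductSpace.toDual ℝ V).symm (ℓ - B (uδε k))‖)
    (huδ : ∀ k, uδ (k + 1) =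
      uδε k + τ • (InnerProductSpace.toDual ℝ U).symm (B.flip (rδ k)))
    (huδε : ∀ k, ‖uδε (k + 1) - uδ (k + 1)‖ ≤ ε * ‖uδε k - uδ (k + 1)‖) :
    Tendsto uδε atTop (nhds ustar) ∧ Tendsto rδ atTop (nhds 0) :=
  inexact_uzawa_convergence_general B ℓ m M hm hmM hBup ustar hcons δ ε τ hδ hε hτ G hG γ hγdef
    hsmall uδε rδ uδ hrδ huδ huδε
end

section
/- One-step contraction estimate for the inexact Uzawa iteration. Assume the problem is consistent: ℓ(v) = b(u*, v) for all v ∈ V, so that r* := R_V⁻¹(ℓ − Bu*) = 0. Fix δ > 0, ε > 0, τ > 0 and set γ := ‖I − τ R_U⁻¹B†R_V⁻¹B‖ (operator norm on U). Let u ∈ U, set r := R_V⁻¹(ℓ − Bu), let r_δ ∈ V satisfy ‖r_δ − r‖_V ≤ δ‖r‖_V, set u⁺_δ := u + τ R_U⁻¹B†r_δ, and let u⁺ ∈ U satisfy ‖u⁺ − u⁺_δ‖_U ≤ ε‖u − u⁺_δ‖_U. Then ‖u⁺ − u*‖_U ≤ (γ + τM²(δ + ε(1 + δ)))‖u − u*‖_U.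 -/
open scoped RealInnerProductSpace

/-- One-step contraction estimate for the inexact Uzawa iteration. -/
theorem inexact_uzawa_one_step_contraction
    {U V : Type*}
    [NormedAddCommGroup U] [InnerProductSpace ℝ U] [CompleteSpace U]
    [NormedAddCommGroup V] [InnerProductSpace ℝ V] [CompleteSpace V]
    (B : U →L[ℝ] V →L[ℝ] ℝ) (ℓ : V →L[ℝ] ℝ) (m M : ℝ)
    (hm : 0 < m) (hmM : m ≤ M)
    (hBlow : ∀ x : U, m * ‖x‖ ≤ ‖B x‖) (hBup : ∀ x : U, ‖B x‖ ≤ M * ‖x‖)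
    (ustar : U) (hcons : ∀ v : V, ℓ v = B ustar v)
    (δ ε τ : ℝ) (hδ : 0 < δ) (hε : 0 < ε) (hτ : 0 < τ)
    (G : U →L[ℝ] U)
    (hG : ∀ x : U, G x = (InnerProductSpace.toDual ℝ U).symm
      (B.flip ((InnerProductSpace.toDual ℝ V).symm (B x))))
    (γ : ℝ) (hγdef : γ = ‖ContinuousLinearMap.id ℝ U - τ • G‖)
    (u : U) (rδ : V)
    (hrδ : ‖rδ - (InnerProductSpace.toDual ℝ V).symm (ℓ - B u)‖ ≤
      δ * ‖(InnerProductSpace.toDual ℝ V).symm (ℓ - B u)‖)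
    (uplusδ : U)
    (huplusδ : uplusδ = u + τ • (InnerProductSpace.toDual ℝ U).symm (B.flip rδ))
    (uplus : U)
    (huplus : ‖uplus - uplusδ‖ ≤ ε * ‖u - uplusδ‖) :
    ‖uplus - ustar‖ ≤ (γ + τ * M ^ 2 * (δ + ε * (1 + δ))) * ‖u - ustar‖ := by
  have hM0 : (0:ℝ) ≤ M := le_trans hm.le hmM
  have hBnorm : ‖B‖ ≤ M := B.opNorm_le_bound hM0 hBup
  have hflip : ∀ w : V, ‖B.flip w‖ ≤ M * ‖w‖ := by
    intro w
    calc ‖B.flip w‖ ≤ ‖B.flip‖ * ‖w‖ := B.flip.le_opNorm w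
    _ ≤ M * ‖w‖ := by
        rw [ContinuousLinearMap.opNorm_flip]
        exact mul_le_mul_of_nonneg_right hBnorm (norm_nonneg w)
  set r : V := (InnerProductSpace.toDual ℝ V).symm (ℓ - B u) with hr
  have hℓ : ℓ - B u = B (ustar - u) := by
    ext v
    simp [hcons v]
  have hrnorm : ‖r‖ ≤ M * ‖u - ustar‖ := by
    rw [hr, LinearIsometryEquiv.norm_map, hℓ]
    calc ‖B (ustar - u)‖ ≤ M * ‖ustar - u‖ := hBup _
    _ = M * ‖u - ustar‖ := by rw [norm_sub_rev]
  set uexact : U := u + τ • G (ustar - u) with huex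
  have h1 : ‖uexact - ustar‖ ≤ γ * ‖u - ustar‖ := by
    have : uexact - ustar = (ContinuousLinearMap.id ℝ U - τ • G) (u - ustar) := by
      simp only [ContinuousLinearMap.sub_apply, ContinuousLinearMap.id_apply,
        ContinuousLinearMap.smul_apply, huex]
      rw [show ustar - u = -(u - ustar) by abel, map_neg]
      module
    rw [this, hγdef]
    exact (ContinuousLinearMap.id ℝ U - τ • G).le_opNorm _
  have hGr : G (ustar - u) = (InnerProductSpace.toDual ℝ U).symm (B.flip r) := by
    rw [hG, hr, hℓ]
  have h2 : ‖uplusδ - uexact‖ ≤ τ * M * ‖rδ - r‖ := by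
    have : uplusδ - uexact = τ • (InnerProductSpace.toDual ℝ U).symm (B.flip (rδ - r)) := by
      rw [huplusδ, huex, hGr, map_sub, map_sub]
      module
    rw [this, norm_smul, Real.norm_eq_abs, abs_of_pos hτ,
      LinearIsometryEquiv.norm_map, mul_assoc]
    exact mul_le_mul_of_nonneg_left (hflip _) hτ.le
  have hrδn : ‖rδ‖ ≤ (1 + δ) * ‖r‖ := by
    have := norm_sub_norm_le rδ r
    nlinarith [hrδ, norm_nonneg r]
  have h3 : ‖u - uplusδ‖ ≤ τ * M * ‖rδ‖ := by
    have : u - uplusδ = -(τ • (InnerProductSpace.toDual ℝ U).symm (B.flip rδ)) := by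
      rw [huplusδ]; abel
    rw [this, norm_neg, norm_smul, Real.norm_eq_abs, abs_of_pos hτ,
      LinearIsometryEquiv.norm_map, mul_assoc]
    exact mul_le_mul_of_nonneg_left (hflip _) hτ.le
  have key : ‖uplus - ustar‖ ≤ ‖uplus - uplusδ‖ + ‖uplusδ - uexact‖ + ‖uexact - ustar‖ := by
    calc ‖uplus - ustar‖ = ‖(uplus - uplusδ) + (uplusδ - uexact) + (uexact - ustar)‖ := by
          congr 1; abel
    _ ≤ _ := norm_add₃_le
  have hA : ‖uplusδ - uexact‖ ≤ τ * M ^ 2 * δ * ‖u - ustar‖ := by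
    calc ‖uplusδ - uexact‖ ≤ τ * M * ‖rδ - r‖ := h2
    _ ≤ τ * M * (δ * ‖r‖) := by
        have h0 : (0:ℝ) ≤ τ * M := mul_nonneg hτ.le hM0
        exact mul_le_mul_of_nonneg_left hrδ h0
    _ ≤ τ * M * (δ * (M * ‖u - ustar‖)) := by
        have h0 : (0:ℝ) ≤ τ * M := mul_nonneg hτ.le hM0
        exact mul_le_mul_of_nonneg_left (mul_le_mul_of_nonneg_left hrnorm hδ.le) h0
    _ = τ * M ^ 2 * δ * ‖u - ustar‖ := by ring
  have hB : ‖u - uplusδ‖ ≤ τ * M ^ 2 * (1 + δ) * ‖u - ustar‖ := by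
    have h0 : (0:ℝ) ≤ τ * M := mul_nonneg hτ.le hM0
    have h1δ : (0:ℝ) ≤ 1 + δ := by linarith
    calc ‖u - uplusδ‖ ≤ τ * M * ‖rδ‖ := h3
    _ ≤ τ * M * ((1 + δ) * ‖r‖) := mul_le_mul_of_nonneg_left hrδn h0
    _ ≤ τ * M * ((1 + δ) * (M * ‖u - ustar‖)) :=
        mul_le_mul_of_nonneg_left (mul_le_mul_of_nonneg_left hrnorm h1δ) h0
    _ = τ * M ^ 2 * (1 + δ) * ‖u - ustar‖ := by ring
  have hC : ‖uplus - uplusδ‖ ≤ ε * (τ * M ^ 2 * (1 + δ) * ‖u - ustar‖) :=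
    huplus.trans (mul_le_mul_of_nonneg_left hB hε.le)
  have heq : (γ + τ * M ^ 2 * (δ + ε * (1 + δ))) * ‖u - ustar‖ =
      γ * ‖u - ustar‖ + τ * M ^ 2 * δ * ‖u - ustar‖ +
        ε * (τ * M ^ 2 * (1 + δ) * ‖u - ustar‖) := by ring
  linarith [key, h1, hA, hC]
end

section
/- Convergence of the one-step-gradient Uzawa Double Ritz iteration (Theorem 3.3). Let (r*, u*) be a saddle point. Fix 0 < α < 1, 0 < ω < 1, and 0 < τ < 2/M², and set τ̃ := τω/(1 + ω). Given r⁰ ∈ V and u⁰, u¹ ∈ U with u¹ = u⁰ + τ̃ R_U⁻¹B†r⁰, define for k ≥ 1: rᵏ := rᵏ⁻¹ − α(rᵏ⁻¹ − R_V⁻¹(ℓ − Buᵏ)) and uᵏ⁺¹ := uᵏ + τ̃ R_U⁻¹B†rᵏ. Then rᵏ − r* → 0 in V and uᵏ − u* → 0 in U as k → ∞. -/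
/-!
Write `S = R_V⁻¹B` and `G = τ̃ S S†`, a positive operator with `‖G‖ ≤ τ̃ M² < 1`. The errors
`dₖ = uₖ - u*`, `eₖ = rₖ - r*` satisfy `dₖ₊₁ = dₖ + τ̃ S† eₖ` and `eₖ₊₁ = (1 - α) eₖ - α S dₖ₊₁`,
so `Xₖ = S dₖ₊₁` and `wₖ = G eₖ` run the heavy-ball iteration `Xₖ₊₁ = Xₖ + wₖ₊₁`,
`wₖ₊₁ = (1 - α) wₖ - α G Xₖ`. Its energy `α ⟪G X, X⟫ + ‖w‖²` drops by at least
`α² (1 - ‖G‖) ‖G Xₖ‖²` per step, hence `G Xₖ → 0`. As `‖S S† S d‖ ≥ m³ ‖d‖`, this gives `dₖ → 0`,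
and then `‖eₖ₊₁‖ ≤ (1 - α) ‖eₖ‖ + α ‖S dₖ₊₁‖` forces `eₖ → 0`.
-/

open scoped RealInnerProductSpace InnerProduct
open Filter ContinuousLinearMap

theorem tendsto_zero_of_le_mul_add {β : ℝ} (hβ0 : 0 ≤ β) (hβ1 : β < 1) {a b : ℕ → ℝ}
    (ha : ∀ k, 0 ≤ a k) (hab : ∀ k, a (k + 1) ≤ β * a k + b k)
    (hb : Tendsto b atTop (nhds 0)) : Tendsto a atTop (nhds 0) := by
  refine tendsto_order.2 ⟨fun c hc => .of_forall fun k => hc.trans_le (ha k), fun ε hε => ?_⟩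
  have hδ : 0 < (1 - β) * (ε / 2) := mul_pos (sub_pos.2 hβ1) (half_pos hε)
  obtain ⟨N, hN⟩ := eventually_atTop.1 (hb.eventually (gt_mem_nhds hδ))
  have hgeom (n : ℕ) : a (N + n) - ε / 2 ≤ β ^ n * (a N - ε / 2) :=
    le_geom (u := fun n => a (N + n) - ε / 2) hβ0 n fun k _ => by
      rw [← add_assoc]
      linarith [hab (N + k), hN (N + k) (N.le_add_right k)]
  have hpow : Tendsto (fun n => β ^ n * (a N - ε / 2)) atTop (nhds 0) := by
    simpa using (tendsto_pow_atTop_nhds_zero_of_lt_one hβ0 hβ1).mul_const (a N - ε / 2)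
  obtain ⟨K, hK⟩ := eventually_atTop.1 (hpow.eventually (gt_mem_nhds (half_pos hε)))
  refine eventually_atTop.2 ⟨N + K, fun k hk => ?_⟩
  obtain ⟨n, rfl⟩ := Nat.exists_eq_add_of_le (le_of_add_le_left hk)
  linarith [hgeom n, hK n (by omega)]

theorem summable_of_add_le_of_nonneg {E c : ℕ → ℝ} (hE : ∀ k, 0 ≤ E k) (hc : ∀ k, 0 ≤ c k)
    (hEc : ∀ k, E (k + 1) + c k ≤ E k) : Summable c := by
  refine summable_of_sum_range_le (c := E 0) hc fun n => ?_
  calc ∑ i ∈ Finset.range n, c i ≤ ∑ i ∈ Finset.range n, (E i - E (i + 1)) :=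
        Finset.sum_le_sum fun i _ => by linarith [hEc i]
    _ = E 0 - E n := Finset.sum_range_sub' E n
    _ ≤ E 0 := by linarith [hE n]

namespace ContinuousLinearMap.IsPositive

variable {V : Type*} [NormedAddCommGroup V] [InnerProductSpace ℝ V] {G : V →L[ℝ] V}

theorem heavyBall_energy_le (hG : G.IsPositive) (hG1 : ‖G‖ ≤ 1) {α : ℝ} (hα0 : 0 ≤ α)
    (hα1 : α ≤ 1) {X w w' : V} (hw' : w' = (1 - α) • w - α • G X) :
    α * ⟪G (X + w'), X + w'⟫ + ‖w'‖ ^ 2 + α ^ 2 * (1 - ‖G‖) * ‖G X‖ ^ 2 ≤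
      α * ⟪G X, X⟫ + ‖w‖ ^ 2 := by
  have hquad : ⟪G (X + w'), X + w'⟫ = ⟪G X, X⟫ + 2 * ⟪G X, w'⟫ + ⟪G w', w'⟫ := by
    rw [map_add, inner_add_left, inner_add_right, inner_add_right,
      hG.inner_left_eq_inner_right w' X, real_inner_comm w' (G X)]
    ring
  have hcross : ⟪G X, w'⟫ = (1 - α) * ⟪G X, w⟫ - α * ‖G X‖ ^ 2 := by
    rw [hw', inner_sub_right, real_inner_smul_right, real_inner_smul_right,
      real_inner_self_eq_norm_sq]
  have hw'sq : ‖w'‖ ^ 2 =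
      (1 - α) ^ 2 * ‖w‖ ^ 2 - 2 * α * (1 - α) * ⟪G X, w⟫ + α ^ 2 * ‖G X‖ ^ 2 := by
    rw [hw', norm_sub_sq_real, norm_smul, norm_smul, inner_smul_left, inner_smul_right,
      real_inner_comm]
    simp only [Real.norm_eq_abs, mul_pow, sq_abs, conj_trivial]
    ring
  -- convexity of `‖·‖ ^ 2`, with defect `α (1 - α) ‖w + G X‖ ^ 2`
  have hconv : ‖w'‖ ^ 2 ≤ (1 - α) * ‖w‖ ^ 2 + α * ‖G X‖ ^ 2 := by
    nlinarith [norm_add_sq_real w (G X), real_inner_comm w (G X),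
      mul_nonneg (mul_nonneg hα0 (sub_nonneg.2 hα1)) (sq_nonneg ‖w + G X‖)]
  have hGw' : ⟪G w', w'⟫ ≤ ‖G‖ * ‖w'‖ ^ 2 :=
    calc ⟪G w', w'⟫ ≤ ‖G w'‖ * ‖w'‖ := real_inner_le_norm _ _
      _ ≤ ‖G‖ * ‖w'‖ * ‖w'‖ := by gcongr; exact G.le_opNorm w'
      _ = ‖G‖ * ‖w'‖ ^ 2 := by ring
  rw [hquad, hcross]
  nlinarith [mul_le_mul_of_nonneg_left hGw' hα0,
    mul_le_mul_of_nonneg_left hconv (mul_nonneg hα0 (norm_nonneg G)),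
    mul_nonneg (mul_nonneg hα0 (sub_nonneg.2 hα1)) (mul_nonneg (sub_nonneg.2 hG1) (sq_nonneg ‖w‖))]

theorem tendsto_apply_of_heavyBall (hG : G.IsPositive) (hG1 : ‖G‖ < 1) {α : ℝ} (hα0 : 0 < α)
    (hα1 : α ≤ 1) {X w : ℕ → V} (hX : ∀ k, X (k + 1) = X k + w (k + 1))
    (hw : ∀ k, w (k + 1) = (1 - α) • w k - α • G (X k)) :
    Tendsto (fun k => G (X k)) atTop (nhds 0) := by
  have hα1G : α ^ 2 * (1 - ‖G‖) ≠ 0 := by have := sub_pos.2 hG1; positivity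
  have hsum : Summable fun k => α ^ 2 * (1 - ‖G‖) * ‖G (X k)‖ ^ 2 :=
    summable_of_add_le_of_nonneg (E := fun k => α * ⟪G (X k), X k⟫ + ‖w k‖ ^ 2)
      (fun k => by have := hG.inner_nonneg_left (X k); positivity)
      (fun k => by have := sub_pos.2 hG1; positivity)
      (fun k => by simpa only [hX k] using hG.heavyBall_energy_le hG1.le hα0.le hα1 (hw k))
  have hsq := ((summable_mul_left_iff hα1G).1 hsum).tendsto_atTop_zero
  simpa [Real.sqrt_sq (norm_nonneg _), tendsto_zero_iff_norm_tendsto_zero] using hsq.sqrt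

end ContinuousLinearMap.IsPositive

section Adjoint

variable {U V : Type*} [NormedAddCommGroup U] [InnerProductSpace ℝ U] [CompleteSpace U]
  [NormedAddCommGroup V] [InnerProductSpace ℝ V] [CompleteSpace V] {S : U →L[ℝ] V} {m : ℝ}

theorem sq_mul_norm_le_norm_adjoint_apply (hm : 0 ≤ m) (hS : ∀ x, m * ‖x‖ ≤ ‖S x‖) (x : U) :
    m ^ 2 * ‖x‖ ≤ ‖(S†) (S x)‖ := by
  rcases (norm_nonneg x).eq_or_lt with hx | hx
  · rw [← hx, mul_zero]; exact norm_nonneg _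
  refine le_of_mul_le_mul_right ?_ hx
  calc m ^ 2 * ‖x‖ * ‖x‖ = (m * ‖x‖) ^ 2 := by ring
    _ ≤ ‖S x‖ ^ 2 := pow_le_pow_left₀ (by positivity) (hS x) 2
    _ = ⟪(S†) (S x), x⟫ := by rw [adjoint_inner_left, real_inner_self_eq_norm_sq]
    _ ≤ ‖(S†) (S x)‖ * ‖x‖ := real_inner_le_norm _ _

theorem pow_three_mul_norm_le_norm_apply_adjoint_apply (hm : 0 ≤ m)
    (hS : ∀ x, m * ‖x‖ ≤ ‖S x‖) (x : U) : m ^ 3 * ‖x‖ ≤ ‖S ((S†) (S x))‖ :=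
  calc m ^ 3 * ‖x‖ = m * (m ^ 2 * ‖x‖) := by ring
    _ ≤ m * ‖(S†) (S x)‖ := by gcongr; exact sq_mul_norm_le_norm_adjoint_apply hm hS x
    _ ≤ ‖S ((S†) (S x))‖ := hS _

theorem tendsto_zero_of_uzawa_error (hm : 0 < m) (hS : ∀ x, m * ‖x‖ ≤ ‖S x‖) {τ α : ℝ}
    (hτ0 : 0 < τ) (hτS : τ * ‖S‖ ^ 2 < 1) (hα0 : 0 < α) (hα1 : α ≤ 1) {d : ℕ → U} {e : ℕ → V}
    (hd : ∀ k, d (k + 1) = d k + τ • (S†) (e k))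
    (he : ∀ k, e (k + 1) = (1 - α) • e k - α • S (d (k + 1))) :
    Tendsto d atTop (nhds 0) ∧ Tendsto e atTop (nhds 0) := by
  set G : V →L[ℝ] V := τ • (S ∘L S†)
  have hG : G.IsPositive := (isPositive_self_comp_adjoint S).smul_of_nonneg hτ0.le
  have hG1 : ‖G‖ < 1 :=
    calc ‖G‖ ≤ τ * (‖S‖ * ‖S†‖) := by
          rw [norm_smul, Real.norm_of_nonneg hτ0.le]; gcongr; exact opNorm_comp_le _ _
      _ = τ * ‖S‖ ^ 2 := by rw [LinearIsometryEquiv.norm_map, sq]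
      _ < 1 := hτS
  have hGSd : Tendsto (fun k => G (S (d (k + 1)))) atTop (nhds 0) := by
    refine hG.tendsto_apply_of_heavyBall hG1 hα0 hα1 (w := fun k => G (e k)) (fun k => ?_)
      (fun k => ?_)
    · simp [G, hd (k + 1)]
    · simp only [he k, map_sub, map_smul]
  have hd0 : Tendsto d atTop (nhds 0) := by
    refine (tendsto_add_atTop_iff_nat 1).1 (squeeze_zero_norm (fun k => ?_)
      (by simpa using hGSd.norm.const_mul (τ * m ^ 3)⁻¹))
    rw [le_inv_mul_iff₀ (by positivity)]
    calc τ * m ^ 3 * ‖d (k + 1)‖ = τ * (m ^ 3 * ‖d (k + 1)‖) := by ring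
      _ ≤ τ * ‖S ((S†) (S (d (k + 1))))‖ := by
          gcongr; exact pow_three_mul_norm_le_norm_apply_adjoint_apply hm.le hS _
      _ = ‖G (S (d (k + 1)))‖ := by simp [G, norm_smul, abs_of_pos hτ0]
  have hSd : Tendsto (fun k => ‖S (d (k + 1))‖) atTop (nhds 0) := by
    simpa [Function.comp_def] using
      (S.continuous.tendsto 0).norm.comp ((tendsto_add_atTop_iff_nat 1).2 hd0)
  refine ⟨hd0, tendsto_zero_iff_norm_tendsto_zero.2 (tendsto_zero_of_le_mul_add
    (sub_nonneg.2 hα1) (sub_lt_self 1 hα0) (fun k => norm_nonneg _) (fun k => ?_)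
    (by simpa using hSd.const_mul α))⟩
  calc ‖e (k + 1)‖ ≤ ‖(1 - α) • e k‖ + ‖α • S (d (k + 1))‖ := by rw [he k]; exact norm_sub_le _ _
    _ = (1 - α) * ‖e k‖ + α * ‖S (d (k + 1))‖ := by
        rw [norm_smul, norm_smul, Real.norm_of_nonneg (sub_nonneg.2 hα1),
          Real.norm_of_nonneg hα0.le]

end Adjoint

section Riesz

variable {U V : Type*} [NormedAddCommGroup U] [InnerProductSpace ℝ U]
  [NormedAddCommGroup V] [InnerProductSpace ℝ V] [CompleteSpace V]

/-- The operator `R_V⁻¹ B : U → V` of a bounded bilinear form `B`. -/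
noncomputable def rieszOp (B : U →L[ℝ] V →L[ℝ] ℝ) : U →L[ℝ] V :=
  (InnerProductSpace.toDual ℝ V).symm.toContinuousLinearEquiv.toContinuousLinearMap ∘L B

variable (B : U →L[ℝ] V →L[ℝ] ℝ)

theorem inner_rieszOp_apply (x : U) (v : V) : ⟪rieszOp B x, v⟫ = B x v :=
  InnerProductSpace.toDual_symm_apply

theorem norm_rieszOp_apply (x : U) : ‖rieszOp B x‖ = ‖B x‖ :=
  (InnerProductSpace.toDual ℝ V).symm.norm_map (B x)

theorem adjoint_rieszOp_apply [CompleteSpace U] (v : V) :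
    ((rieszOp B)†) v = (InnerProductSpace.toDual ℝ U).symm (B.flip v) :=
  ext_inner_right ℝ fun x => by
    rw [adjoint_inner_left, real_inner_comm, inner_rieszOp_apply,
      InnerProductSpace.toDual_symm_apply, flip_apply]

end Riesz

/-- Convergence of the one-step-gradient Uzawa Double Ritz iteration (Theorem 3.3). -/
theorem uzawa_double_ritz_one_step_gradient_convergence
    {U V : Type*}
    [NormedAddCommGroup U] [InnerProductSpace ℝ U] [CompleteSpace U]
    [NormedAddCommGroup V] [InnerProductSpace ℝ V] [CompleteSpace V]
    (B : U →L[ℝ] V →L[ℝ] ℝ) (ℓ : V →L[ℝ] ℝ) (m M : ℝ)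
    (hm : 0 < m) (hmM : m ≤ M)
    (hBlow : ∀ x : U, m * ‖x‖ ≤ ‖B x‖) (hBup : ∀ x : U, ‖B x‖ ≤ M * ‖x‖)
    (rstar : V) (ustar : U)
    (hsad1 : ∀ v : V, ⟪rstar, v⟫ + B ustar v = ℓ v)
    (hsad2 : ∀ w : U, B w rstar = 0)
    (α ω τ : ℝ) (hα0 : 0 < α) (hα1 : α < 1) (hω0 : 0 < ω) (hω1 : ω < 1)
    (hτ0 : 0 < τ) (hτ2 : τ < 2 / M ^ 2)
    (τt : ℝ) (hτt : τt = τ * ω / (1 + ω))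
    (r : ℕ → V) (u : ℕ → U)
    (hu1 : u 1 = u 0 + τt • (InnerProductSpace.toDual ℝ U).symm (B.flip (r 0)))
    (hr : ∀ k : ℕ, r (k + 1) = r k - α •
      (r k - (InnerProductSpace.toDual ℝ V).symm (ℓ - B (u (k + 1)))))
    (hu : ∀ k : ℕ, u (k + 2) = u (k + 1) +
      τt • (InnerProductSpace.toDual ℝ U).symm (B.flip (r (k + 1)))) :
    Tendsto (fun k => r k - rstar) atTop (nhds 0) ∧
      Tendsto (fun k => u k - ustar) atTop (nhds 0) := by
  set S := rieszOp B
  have hM : 0 < M := hm.trans_le hmM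
  have hSM : ‖S‖ ≤ M :=
    opNorm_le_bound _ hM.le fun x => (norm_rieszOp_apply B x).trans_le (hBup x)
  have hτS : τt * ‖S‖ ^ 2 < 1 := by
    have hτM : τ * M ^ 2 < 2 := (lt_div_iff₀ (by positivity)).1 hτ2
    calc τt * ‖S‖ ^ 2 ≤ τt * M ^ 2 := by rw [hτt]; gcongr
      _ < 1 := by rw [hτt, div_mul_eq_mul_div, div_lt_one (by positivity)]; nlinarith
  have hSr : (S†) rstar = 0 := ext_inner_right ℝ fun w => by
    rw [adjoint_inner_left, real_inner_comm, inner_rieszOp_apply, hsad2, inner_zero_left]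
  have hres (x : U) : (InnerProductSpace.toDual ℝ V).symm (ℓ - B x) = rstar - S (x - ustar) :=
    ext_inner_right ℝ fun v => by
      rw [InnerProductSpace.toDual_symm_apply, inner_sub_left, inner_rieszOp_apply, sub_apply,
        ← hsad1 v, map_sub, sub_apply]
      ring
  have hu' (k : ℕ) : u (k + 1) = u k + τt • (S†) (r k) := by
    rw [adjoint_rieszOp_apply]; cases k with
    | zero => exact hu1
    | succ k => exact hu k
  obtain ⟨hd, he⟩ := tendsto_zero_of_uzawa_error (d := fun k => u k - ustar)
    (e := fun k => r k - rstar) hm (fun x => (norm_rieszOp_apply B x).symm ▸ hBlow x)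
    (by rw [hτt]; positivity) hτS hα0 hα1.le
    (fun k => by simp only [hu' k, map_sub, hSr, sub_zero]; abel)
    (fun k => by rw [hr k, hres]; module)
  exact ⟨he, hd⟩
end

section
/- Solution error recursion for the one-step-gradient iteration. Let (r*, u*) be a saddle point, so that r* = R_V⁻¹(ℓ − Bu*) and R_U⁻¹B†r* = 0. Let α ∈ ℝ, τ̃ > 0, and let r_prev ∈ V, u ∈ U. Define r := r_prev − α(r_prev − R_V⁻¹(ℓ − Bu)) and u⁺ := u + τ̃ R_U⁻¹B†r. Then u⁺ − u* = (I − τ̃α R_U⁻¹B†R_V⁻¹B)(u − u*) + τ̃(1 − α) R_U⁻¹B†(r_prev − r*). -/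
open scoped RealInnerProductSpace

/-- Solution error recursion for the one-step-gradient iteration. -/
theorem solution_error_recursion
    {U V : Type*}
    [NormedAddCommGroup U] [InnerProductSpace ℝ U] [CompleteSpace U]
    [NormedAddCommGroup V] [InnerProductSpace ℝ V] [CompleteSpace V]
    (B : U →L[ℝ] V →L[ℝ] ℝ) (ℓ : V →L[ℝ] ℝ)
    (rstar : V) (ustar : U)
    (hsad1 : ∀ v : V, ⟪rstar, v⟫ + B ustar v = ℓ v)
    (hsad2 : ∀ w : U, B w rstar = 0)
    (α τt : ℝ) (hτt : 0 < τt)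
    (rprev : V) (u : U) (r : V) (uplus : U)
    (hrdef : r = rprev - α •
      (rprev - (InnerProductSpace.toDual ℝ V).symm (ℓ - B u)))
    (hudef : uplus = u + τt • (InnerProductSpace.toDual ℝ U).symm (B.flip r)) :
    uplus - ustar =
      ((u - ustar) - (τt * α) • (InnerProductSpace.toDual ℝ U).symm
        (B.flip ((InnerProductSpace.toDual ℝ V).symm (B (u - ustar))))) +
      (τt * (1 - α)) • (InnerProductSpace.toDual ℝ U).symm
        (B.flip (rprev - rstar)) := by
  have hrs : (InnerProductSpace.toDual ℝ V) rstar = ℓ - B ustar := by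
    ext v
    have h := hsad1 v
    simp only [InnerProductSpace.toDual_apply_apply, ContinuousLinearMap.sub_apply]
    linarith
  have h1 : (InnerProductSpace.toDual ℝ V).symm (ℓ - B u) =
      rstar - (InnerProductSpace.toDual ℝ V).symm (B (u - ustar)) := by
    apply (InnerProductSpace.toDual ℝ V).injective
    simp [hrs, map_sub]
  have hBrs : B.flip rstar = 0 := by
    ext w
    simp [hsad2 w]
  subst hudef hrdef
  rw [h1]
  set s := (InnerProductSpace.toDual ℝ V).symm (B (u - ustar)) with hs
  have expand : rprev - α • (rprev - (rstar - s)) =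
      rstar + ((1 - α) • (rprev - rstar) - α • s) := by module
  rw [expand]
  simp only [map_add, map_sub, map_smul, hBrs, zero_add]
  module
end

section
/- Eigenvalue reduction to the scalar characteristic equation. Let α ∈ ℝ, τ̃ ∈ ℝ, and set G := R_U⁻¹B†R_V⁻¹B : U → U. Suppose (v, w) ∈ V × U with w ≠ 0 satisfies the block eigenvalue relations (1 − α)v − α R_V⁻¹Bw = λv and τ̃(1 − α) R_U⁻¹B†v + w − τ̃α Gw = λw for some real λ with λ ≠ 1 − α, and suppose Gw = μw for some μ ∈ ℝ. Then (1 − α − λ)(1 − λ) + λτ̃αμ = 0, i.e. λ is a root of p(λ) = λ² − (2 − α − τ̃αμ)λ + (1 − α). -/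
open scoped RealInnerProductSpace

/-- Eigenvalue reduction to the scalar characteristic equation. -/
theorem eigenvalue_reduction_characteristic
    {U V : Type*}
    [NormedAddCommGroup U] [InnerProductSpace ℝ U] [CompleteSpace U]
    [NormedAddCommGroup V] [InnerProductSpace ℝ V] [CompleteSpace V]
    (B : U →L[ℝ] V →L[ℝ] ℝ)
    (α τt : ℝ)
    (G : U →L[ℝ] U)
    (hG : ∀ x : U, G x = (InnerProductSpace.toDual ℝ U).symm
      (B.flip ((InnerProductSpace.toDual ℝ V).symm (B x))))
    (v : V) (w : U) (hw : w ≠ 0) (lam μ : ℝ)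
    (h1 : (1 - α) • v - α • (InnerProductSpace.toDual ℝ V).symm (B w) = lam • v)
    (h2 : (τt * (1 - α)) • (InnerProductSpace.toDual ℝ U).symm (B.flip v)
      + w - (τt * α) • G w = lam • w)
    (hlam : lam ≠ 1 - α)
    (hμ : G w = μ • w) :
    (1 - α - lam) * (1 - lam) + lam * τt * α * μ = 0 := by
  set s : ℝ := 1 - α - lam with hs
  have hs0 : s ≠ 0 := by
    intro h
    apply hlam
    linarith [hs ▸ h]
  -- from h1: s • v = α • T (B w)
  have hv : s • v = α • (InnerProductSpace.toDual ℝ V).symm (B w) := by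
    show (1 - α - lam) • v = _
    rw [sub_smul, sub_smul]
    linear_combination (norm := module) h1
  -- apply R_U⁻¹ B† to hv
  have key : s • ((InnerProductSpace.toDual ℝ U).symm (B.flip v)) = (α * μ) • w := by
    have := congrArg (fun x : V => (InnerProductSpace.toDual ℝ U).symm (B.flip x)) hv
    simp only [map_smul] at this
    rw [this, ← hG w, hμ, smul_smul]
  -- multiply h2 by s
  have h2' := congrArg (fun x : U => s • x) h2
  simp only [smul_add, smul_sub, smul_smul] at h2'
  rw [mul_comm s (τt * (1 - α)), mul_smul, key, smul_smul, hμ, smul_smul] at h2'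
  have hcomb : (τt * (1 - α) * (α * μ) + s - s * (τt * α) * μ - s * lam) • w = 0 := by
    rw [sub_eq_iff_eq_add'] at h2'
    linear_combination (norm := module) h2'
  have hc : τt * (1 - α) * (α * μ) + s - s * (τt * α) * μ - s * lam = 0 := by
    by_contra h
    exact hw (by simpa [h] using smul_eq_zero.mp hcomb |>.resolve_left h)
  rw [hs] at hc
  ring_nf at hc ⊢
  linarith
end

section
/- Root location for the characteristic polynomial of the one-step-gradient Uzawa iteration. Let 0 < α < 1, let 0 < m ≤ M, let μ ∈ [m², M²], and let τ̃ satisfy 0 < τ̃ < 2/M². Then both complex roots of the quadratic p(λ) = λ² − (2 − α − τ̃αμ)λ + (1 − α) have modulus strictly less than 1. -/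
/-!
By the Schur–Cohn (Jury) criterion, both roots of a real quadratic `z² - b z + c` lie in the
open unit disc as soon as `c < 1` and `|b| < 1 + c`: a non-real root `z` is paired with `conj z`,
so `‖z‖² = c`; a real root `x` with `|x| ≥ 1` would force the other root `b - x` to the same side
of `±1` (since `p(1) > 0` and `p(-1) > 0`), making the product `c` of the roots at least `1`.
Here `c = 1 - α` and `b = 2 - α - τ̃αμ`, and the criterion reduces to `0 < τ̃αμ < 4 - 2α`,
which follows from `0 < τ̃μ < 2` and `α < 1`.
-/

lemma abs_lt_one_of_quadratic_eq_zero {b c x : ℝ} (hx : x ^ 2 - b * x + c = 0)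
    (hc : c < 1) (hb : |b| < 1 + c) : |x| < 1 := by
  obtain ⟨hb₁, hb₂⟩ := abs_lt.mp hb
  rw [abs_lt]
  constructor <;> by_contra! h <;> nlinarith

lemma Complex.normSq_eq_of_quadratic_eq_zero_of_im_ne_zero {b c : ℝ} {z : ℂ}
    (hz : z ^ 2 - b * z + c = 0) (him : z.im ≠ 0) : Complex.normSq z = c := by
  have hre := congrArg Complex.re hz
  have him' := congrArg Complex.im hz
  simp only [sq, Complex.sub_re, Complex.add_re, Complex.mul_re, Complex.ofReal_re,
    Complex.ofReal_im, Complex.sub_im, Complex.add_im, Complex.mul_im, Complex.zero_re,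
    Complex.zero_im] at hre him'
  have h2re : 2 * z.re = b := by
    have : z.im * (2 * z.re - b) = 0 := by linear_combination him'
    linarith [(mul_eq_zero.mp this).resolve_left him]
  rw [Complex.normSq_apply]
  linear_combination z.re * h2re - hre

lemma Complex.norm_lt_one_of_quadratic_eq_zero {b c : ℝ} {z : ℂ}
    (hz : z ^ 2 - b * z + c = 0) (hc : c < 1) (hb : |b| < 1 + c) : ‖z‖ < 1 := by
  rw [← sq_lt_one_iff₀ (norm_nonneg z), Complex.sq_norm]
  rcases eq_or_ne z.im 0 with him | him
  · have hz_real : z = (z.re : ℂ) := by simpa [Complex.ext_iff] using him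
    rw [hz_real] at hz
    have hx : z.re ^ 2 - b * z.re + c = 0 := by exact_mod_cast hz
    rw [Complex.normSq_apply, him, mul_zero, add_zero, ← sq, sq_lt_one_iff_abs_lt_one]
    exact abs_lt_one_of_quadratic_eq_zero hx hc hb
  · rw [Complex.normSq_eq_of_quadratic_eq_zero_of_im_ne_zero hz him]
    exact hc

theorem characteristic_roots_in_unit_disc_general
    (α m M μ τt : ℝ)
    (hα0 : 0 < α) (hα1 : α < 1)
    (hm : 0 < m)
    (hμ : μ ∈ Set.Icc (m ^ 2) (M ^ 2))
    (hτt0 : 0 < τt) (hτt2 : τt < 2 / M ^ 2) :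
    ∀ z : ℂ, z ^ 2 - ((2 - α - τt * α * μ : ℝ) : ℂ) * z + ((1 - α : ℝ) : ℂ) = 0 →
      ‖z‖ < 1 := by
  intro z hz
  obtain ⟨hmμ, hμM⟩ := hμ
  have hμ0 : 0 < μ := lt_of_lt_of_le (by positivity) hmμ
  have hτμ : τt * μ < 2 := calc
    τt * μ ≤ τt * M ^ 2 := by gcongr
    _ < 2 / M ^ 2 * M ^ 2 := by gcongr; linarith
    _ = 2 := div_mul_cancel₀ 2 (by linarith)
  have hταμ : 0 < τt * α * μ := by positivity
  refine Complex.norm_lt_one_of_quadratic_eq_zero hz (by linarith) (abs_lt.mpr ⟨?_, by linarith⟩)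
  nlinarith

/-- Root location for the characteristic polynomial of the
one-step-gradient Uzawa iteration. -/
theorem characteristic_roots_in_unit_disc
    (α m M μ τt : ℝ)
    (hα0 : 0 < α) (hα1 : α < 1)
    (hm : 0 < m) (hmM : m ≤ M)
    (hμ : μ ∈ Set.Icc (m ^ 2) (M ^ 2))
    (hτt0 : 0 < τt) (hτt2 : τt < 2 / M ^ 2) :
    ∀ z : ℂ, z ^ 2 - ((2 - α - τt * α * μ : ℝ) : ℂ) * z + ((1 - α : ℝ) : ℂ) = 0 →
      ‖z‖ < 1 :=
  characteristic_roots_in_unit_disc_general α m M μ τt hα0 hα1 hm hμ hτt0 hτt2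
end

section
/- Equivalence of dual-norm residual minimization and the saddle-point (mixed) formulation. Define J : U → ℝ by J(u) = ½‖Bu − ℓ‖_{V*}². Then u ∈ U minimizes J over U if and only if the pair (r, u) with r := R_V⁻¹(ℓ − Bu) solves the mixed problem: (r, v)_V + b(u, v) = ℓ(v) for all v ∈ V and b(w, r) = 0 for all w ∈ U. -/
open scoped RealInnerProductSpace

lemma aux_quad_zero {c k : ℝ} (hk : 0 ≤ k) (h : ∀ t : ℝ, 0 ≤ t * c + t ^ 2 * k) :
    c = 0 := by
  by_contra hc
  have hs : (0:ℝ) < 2 * k + 1 := by linarith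
  have h1 := h (-c / (2 * k + 1))
  have hc2 : 0 < c ^ 2 := by positivity
  have ht : -c / (2 * k + 1) * (2 * k + 1) = -c := by field_simp
  nlinarith [mul_nonneg h1 (le_of_lt (mul_pos hs hs)), sq_nonneg c]

/-- Equivalence of dual-norm residual minimization and the
saddle-point (mixed) formulation. -/
theorem residual_minimization_iff_mixed
    {U V : Type*}
    [NormedAddCommGroup U] [InnerProductSpace ℝ U] [CompleteSpace U]
    [NormedAddCommGroup V] [InnerProductSpace ℝ V] [CompleteSpace V]
    (B : U →L[ℝ] V →L[ℝ] ℝ) (ℓ : V →L[ℝ] ℝ) (m M : ℝ)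
    (hm : 0 < m) (hmM : m ≤ M)
    (hBlow : ∀ x : U, m * ‖x‖ ≤ ‖B x‖) (hBup : ∀ x : U, ‖B x‖ ≤ M * ‖x‖)
    (u : U) :
    (∀ w : U, 1 / 2 * ‖B u - ℓ‖ ^ 2 ≤ 1 / 2 * ‖B w - ℓ‖ ^ 2) ↔
      ((∀ v : V, ⟪(InnerProductSpace.toDual ℝ V).symm (ℓ - B u), v⟫ + B u v = ℓ v) ∧
        (∀ w : U, B w ((InnerProductSpace.toDual ℝ V).symm (ℓ - B u)) = 0)) := by
  set d := InnerProductSpace.toDual ℝ V with hd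
  have hdapp : ∀ (f : V →L[ℝ] ℝ) (v : V), ⟪d.symm f, v⟫ = f v := by
    intro f v
    rw [hd, ← InnerProductSpace.toDual_apply_apply, LinearIsometryEquiv.apply_symm_apply]
  have hBr : ∀ w : U, B w (d.symm (ℓ - B u)) = ⟪d.symm (B w), d.symm (ℓ - B u)⟫ := by
    intro w
    exact (hdapp (B w) _).symm
  have hnorm : ∀ f : V →L[ℝ] ℝ, ‖f‖ = ‖d.symm f‖ := fun f => (d.symm.norm_map f).symm
  have hflip : ∀ w : U, ⟪d.symm (B w), d.symm (ℓ - B u)⟫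
      = -⟪d.symm (B w), d.symm (B u - ℓ)⟫ := by
    intro w
    rw [← inner_neg_right, ← map_neg]
    congr 1
    abel
  constructor
  · intro hmin
    refine ⟨fun v => ?_, fun w => ?_⟩
    · rw [hdapp]
      simp
    · rw [hBr w, hflip w, neg_eq_zero]
      apply aux_quad_zero (k := 1 / 2 * ‖d.symm (B w)‖ ^ 2) (by positivity)
      intro t
      have h := hmin (u + t • w)
      have hexp : B (u + t • w) - ℓ = (B u - ℓ) + t • B w := by
        rw [map_add, map_smul]; abel
      rw [hnorm (B (u + t • w) - ℓ), hexp, map_add, map_smul, norm_add_sq_real,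
        inner_smul_right, norm_smul, hnorm (B u - ℓ)] at h
      have hsym : ⟪d.symm (B u - ℓ), d.symm (B w)⟫ = ⟪d.symm (B w), d.symm (B u - ℓ)⟫ :=
        real_inner_comm _ _
      rw [hsym] at h
      simp only [Real.norm_eq_abs, mul_pow, sq_abs] at h
      nlinarith
  · rintro ⟨-, h2⟩ w
    have hkey : ⟪d.symm (B (w - u)), d.symm (B u - ℓ)⟫ = 0 := by
      have := h2 (w - u)
      rw [hBr (w - u), hflip (w - u)] at this
      linarith
    have hexp : B w - ℓ = (B (w - u)) + (B u - ℓ) := by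
      rw [map_sub]; abel
    rw [hnorm (B w - ℓ), hexp, map_add, norm_add_sq_real, hkey, hnorm (B u - ℓ)]
    nlinarith [sq_nonneg ‖d.symm (B (w - u))‖]
end
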